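/- For the two-link arm with joint-space mass matrix M = m·[[L²+ℓ², ℓ²],[ℓ², ℓ²]] (m, L, ℓ with m > 0, L ≠ 0, ℓ ≠ 0), the joint torque covectors τ_x = (−mL, 0) and τ_y = (mℓ, mℓ) corresponding to unit ambient accelerations in the x and y directions both have squared dual-metric norm equal to m: τ M⁻¹ τᵀ = m for τ ∈ {τ_x, τ_y}. -/

import Mathlib

/-!
The mass matrix is the pull-back `M = m • Jᵀ J` of the ambient kinetic metric of a point mass `m`
along the end-effector Jacobian `J = !![-L, 0; ℓ, ℓ]`, and the torque for an ambient acceleration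
`a` is `τ = m • Jᵀ a`. Hence `M⁻¹ τ = J⁻¹ a` and `τ ⬝ M⁻¹ τ = m • (Jᵀ a) ⬝ J⁻¹ a = m • (a ⬝ a)`,
which is `m` for the unit accelerations `a = e_x, e_y`.
-/

open Matrix

section PullbackMetric

variable {n K : Type*} [Fintype n] [DecidableEq n] [Field K]
  {c : K} {J : Matrix n n K}

theorem mulVec_inv_smul_transpose_mul_self (hc : c ≠ 0) (hJ : IsUnit J.det) (a : n → K) :
    (c • (Jᵀ * J))⁻¹ *ᵥ (c • (Jᵀ *ᵥ a)) = J⁻¹ *ᵥ a := by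
  have hJt : IsUnit Jᵀ.det := by rwa [det_transpose]
  have hinv : (c • (Jᵀ * J))⁻¹ = c⁻¹ • (J⁻¹ * Jᵀ⁻¹) := by
    refine inv_eq_right_inv ?_
    rw [smul_mul_smul_comm, mul_inv_cancel₀ hc, one_smul, Matrix.mul_assoc,
      ← Matrix.mul_assoc J, mul_nonsing_inv J hJ, Matrix.one_mul, mul_nonsing_inv _ hJt]
  rw [hinv, smul_mulVec, mulVec_smul, smul_smul, inv_mul_cancel₀ hc, one_smul, mulVec_mulVec,
    Matrix.mul_assoc, nonsing_inv_mul _ hJt, Matrix.mul_one]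

theorem dotProduct_mulVec_inv_smul_transpose_mul_self (hc : c ≠ 0) (hJ : IsUnit J.det)
    (a : n → K) :
    c • (Jᵀ *ᵥ a) ⬝ᵥ (c • (Jᵀ * J))⁻¹ *ᵥ (c • (Jᵀ *ᵥ a)) = c * (a ⬝ᵥ a) := by
  rw [mulVec_inv_smul_transpose_mul_self hc hJ, smul_dotProduct, ← vecMul_transpose,
    transpose_transpose, ← dotProduct_mulVec, mulVec_mulVec, mul_nonsing_inv _ hJ, one_mulVec,
    smul_eq_mul]

end PullbackMetric

theorem two_link_arm_dual_norms_of_torques (m L ℓ : ℝ) (hm : 0 < m) (hL : L ≠ 0) (hℓ : ℓ ≠ 0)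
    (M : Matrix (Fin 2) (Fin 2) ℝ)
    (hM : M = m • ![![L ^ 2 + ℓ ^ 2, ℓ ^ 2], ![ℓ ^ 2, ℓ ^ 2]])
    (τx τy : Fin 2 → ℝ) (hτx : τx = ![-(m * L), 0]) (hτy : τy = ![m * ℓ, m * ℓ]) :
    τx ⬝ᵥ M⁻¹.mulVec τx = m ∧ τy ⬝ᵥ M⁻¹.mulVec τy = m := by
  let J : Matrix (Fin 2) (Fin 2) ℝ := !![-L, 0; ℓ, ℓ]
  have hJ : IsUnit J.det := by
    simpa [J, det_fin_two] using mul_ne_zero hL hℓ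
  have hMJ : M = m • (Jᵀ * J) := by
    rw [hM]; congr 1
    ext i j; fin_cases i <;> fin_cases j <;> simp [J, mul_apply, Fin.sum_univ_two, sq]
  have hτx' : τx = m • (Jᵀ *ᵥ ![1, 0]) := by
    rw [hτx]; ext i; fin_cases i <;> simp [J]
  have hτy' : τy = m • (Jᵀ *ᵥ ![0, 1]) := by
    rw [hτy]; ext i; fin_cases i <;> simp [J]
  rw [hMJ, hτx', hτy', dotProduct_mulVec_inv_smul_transpose_mul_self hm.ne' hJ,
    dotProduct_mulVec_inv_smul_transpose_mul_self hm.ne' hJ]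
  simp
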